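/- For any R, R_d ∈ SO(3), ‖e_R‖ ≤ 1, where e_R = ((1/2)(R_dᵀR − RᵀR_d))ᵛ. -/

import Mathlib

open Matrix
noncomputable section

/-- `SO3 R` : `R` is a rotation matrix. -/
def SO3 (R : Matrix (Fin 3) (Fin 3) ℝ) : Prop := Rᵀ * R = 1 ∧ R.det = 1

/-- Attitude error function `Ψ(R,R_d) = ½ tr(I − R_dᵀ R)`. -/
def Psi (R Rd : Matrix (Fin 3) (Fin 3) ℝ) : ℝ := (1/2) * (1 - Rdᵀ * R).trace

/-- The hat map identifying `ℝ³` with skew-symmetric matrices. -/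
def hat (x : Fin 3 → ℝ) : Matrix (Fin 3) (Fin 3) ℝ :=
  !![0, -x 2, x 1; x 2, 0, -x 0; -x 1, x 0, 0]

/-- The vee map, inverse of the hat map on skew-symmetric matrices. -/
def vee (A : Matrix (Fin 3) (Fin 3) ℝ) : Fin 3 → ℝ := ![A 2 1, A 0 2, A 1 0]

/-- Attitude error vector `e_R = (½ (R_dᵀ R − Rᵀ R_d))ᵛ`. -/
def eR (R Rd : Matrix (Fin 3) (Fin 3) ℝ) : Fin 3 → ℝ :=
  vee ((1/2 : ℝ) • (Rdᵀ * R - Rᵀ * Rd))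

/-- Euclidean dot product on `ℝ³`. -/
def dot (x y : Fin 3 → ℝ) : ℝ := ∑ i, x i * y i

/-- Euclidean norm on `ℝ³`. -/
def enorm3 (x : Fin 3 → ℝ) : ℝ := Real.sqrt (dot x x)

/-- Cross product on `ℝ³`. -/
def cross (x y : Fin 3 → ℝ) : Fin 3 → ℝ :=
  ![x 1 * y 2 - x 2 * y 1, x 2 * y 0 - x 0 * y 2, x 0 * y 1 - x 1 * y 0]

/-!
`e_R` depends only on the relative attitude `Q = R_dᵀ R ∈ SO(3)`. On `SO(3)` the adjugate is the
transpose, so the principal `2 × 2` minors of `Q` sum to `tr Q`; together with `∑ Q_ij² = 3` this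
gives `‖e_R‖² = Ψ (2 - Ψ) = 1 - (1 - Ψ)² ≤ 1`, i.e. `sin² θ = 1 - cos² θ` for the rotation angle `θ`.
-/

theorem SO3.transpose_mul {A B : Matrix (Fin 3) (Fin 3) ℝ} (hA : SO3 A) (hB : SO3 B) :
    SO3 (Aᵀ * B) := by
  refine ⟨?_, by rw [det_mul, det_transpose, hA.2, hB.2, one_mul]⟩
  rw [Matrix.transpose_mul, transpose_transpose, Matrix.mul_assoc, ← Matrix.mul_assoc A,
    mul_eq_one_comm.mp hA.1, Matrix.one_mul, hB.1]

theorem SO3.adjugate_eq_transpose {Q : Matrix (Fin 3) (Fin 3) ℝ} (hQ : SO3 Q) :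
    Q.adjugate = Qᵀ := by
  calc Q.adjugate = Qᵀ * Q * Q.adjugate := by rw [hQ.1, Matrix.one_mul]
    _ = Qᵀ := by rw [Matrix.mul_assoc, mul_adjugate, hQ.2, one_smul, Matrix.mul_one]

theorem dot_eR_self {R Rd : Matrix (Fin 3) (Fin 3) ℝ} (hQ : SO3 (Rdᵀ * R)) :
    dot (eR R Rd) (eR R Rd) = Psi R Rd * (2 - Psi R Rd) := by
  have hfrob := congrArg Matrix.trace hQ.1
  have hminors := congrArg Matrix.trace hQ.adjugate_eq_transpose
  rw [eR, Psi, ← transpose_transpose Rd, ← Matrix.transpose_mul, transpose_transpose]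
  generalize Rdᵀ * R = Q at hfrob hminors
  simp only [trace_fin_three, mul_apply, transpose_apply, Fin.sum_univ_three, one_apply_eq,
    adjugate_fin_three, of_apply, cons_val', cons_val_zero, cons_val_one, cons_val_two,
    head_cons, tail_cons, empty_val', cons_val_fin_one, head_fin_const] at hfrob hminors
  simp only [dot, vee, Fin.sum_univ_three, Matrix.smul_apply, Matrix.sub_apply, transpose_apply,
    smul_eq_mul, cons_val_zero, cons_val_one, cons_val_two, head_cons, tail_cons, trace_fin_three,
    one_apply_eq]
  linear_combination (1/4 : ℝ) * hfrob + (1/2 : ℝ) * hminors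

theorem eR_norm_le_one (R Rd : Matrix (Fin 3) (Fin 3) ℝ)
    (hR : SO3 R) (hRd : SO3 Rd) :
    enorm3 (eR R Rd) ≤ 1 := by
  have hsq : dot (eR R Rd) (eR R Rd) ≤ 1 := by
    rw [dot_eR_self (hRd.transpose_mul hR)]
    nlinarith [sq_nonneg (Psi R Rd - 1)]
  exact Real.sqrt_le_one.mpr hsq
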